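/- Let B, D′ ∈ X(ℝ) be such that the variety Y_{B,D′} has a smooth real point C′, and let V ⊆ X(ℝ) be an open neighbourhood of C′. Then there is an open neighbourhood U ⊆ X(ℝ) of D′ such that for every D ∈ U, the variety Y_{B,D} has a smooth real point C ∈ V. -/

import Mathlib

open MvPolynomial Matrix

/-- The gradient of a multivariate polynomial with rational coefficients,
evaluated at a point with coordinates in a `ℚ`-algebra `K`. -/
noncomputable def grad {K : Type} [CommRing K] [Algebra ℚ K] {m : ℕ}
    (F : MvPolynomial (Fin m) ℚ) (v : Fin m → K) : Fin m → K :=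
  fun i => MvPolynomial.aeval v (MvPolynomial.pderiv i F)

/-- `F` is a nonzero cubic form defining a smooth cubic hypersurface. -/
def SmoothCubic {m : ℕ} (F : MvPolynomial (Fin m) ℚ) : Prop :=
  F ≠ 0 ∧ F.IsHomogeneous 3 ∧
    ∀ v : Fin m → ℂ, v ≠ 0 → MvPolynomial.aeval v F = 0 → grad F v ≠ 0

/-- The set of `K`-points of the hypersurface `X : F = 0`. -/
def XPts (K : Type) [Field K] [Algebra ℚ K] {m : ℕ} (F : MvPolynomial (Fin m) ℚ) :
    Set (Projectivization K (Fin m → K)) :=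
  {P | MvPolynomial.aeval P.rep F = 0}

/-- `ℓ · X = P + Q + R` for some line `ℓ` over `K` not contained in `X`:
the restriction of `F` to a linear parametrization of the line spanned by `u, w`
is a nonzero binary cubic whose roots (with multiplicity) correspond to `P, Q, R`. -/
def LineEq {K : Type} [Field K] [Algebra ℚ K] {m : ℕ}
    (F : MvPolynomial (Fin m) ℚ)
    (P Q R : Projectivization K (Fin m → K)) : Prop :=
  ∃ (u w : Fin m → K) (aP bP aQ bQ aR bR c : K)
    (hP : aP • u + bP • w ≠ 0) (hQ : aQ • u + bQ • w ≠ 0) (hR : aR • u + bR • w ≠ 0),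
      LinearIndependent K ![u, w] ∧ c ≠ 0 ∧
      P = Projectivization.mk K (aP • u + bP • w) hP ∧
      Q = Projectivization.mk K (aQ • u + bQ • w) hQ ∧
      R = Projectivization.mk K (aR • u + bR • w) hR ∧
      ∀ s t : K, MvPolynomial.aeval (s • u + t • w) F =
        c * (bP * s - aP * t) * (bQ * s - aQ * t) * (bR * s - aR * t)

/-- The span of `S ⊆ X(ℚ)` under secant and tangent constructions: the smallest
subset of `X(ℚ)` containing `S` and closed under taking the third point of
intersection of a rational line with `X`. -/
def SpanSet {m : ℕ} (F : MvPolynomial (Fin m) ℚ)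
    (S : Set (Projectivization ℚ (Fin m → ℚ))) : Set (Projectivization ℚ (Fin m → ℚ)) :=
  ⋂₀ {T | S ⊆ T ∧ T ⊆ XPts ℚ F ∧
        ∀ P Q R, LineEq F P Q R → P ∈ T → Q ∈ T → R ∈ T}

/-- The quotient topology on real projective space. -/
instance projectivizationTopology (m : ℕ) :
    TopologicalSpace (Projectivization ℝ (Fin m → ℝ)) :=
  inferInstanceAs (TopologicalSpace (Quotient (projectivizationSetoid ℝ (Fin m → ℝ))))

/-- `U` is an open subset of `X(ℝ)` in the subspace topology. -/
def IsOpenInX {m : ℕ} (F : MvPolynomial (Fin m) ℚ)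
    (U : Set (Projectivization ℝ (Fin m → ℝ))) : Prop :=
  ∃ O : Set (Projectivization ℝ (Fin m → ℝ)), IsOpen O ∧ U = O ∩ XPts ℝ F

/-- The real projective point associated to a rational projective point. -/
noncomputable def ratToReal {m : ℕ} (P : Projectivization ℚ (Fin m → ℚ)) :
    Projectivization ℝ (Fin m → ℝ) :=
  Projectivization.mk ℝ (fun i => (P.rep i : ℝ)) (by
    intro h
    apply Projectivization.rep_nonzero P
    funext i
    have hi : ((P.rep i : ℝ)) = 0 := congrFun h i
    exact_mod_cast hi)

/-- The Hessian matrix of `F` at `v`. -/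
noncomputable def hessAt {K : Type} [CommRing K] [Algebra ℚ K] {m : ℕ}
    (F : MvPolynomial (Fin m) ℚ) (v : Fin m → K) : Matrix (Fin m) (Fin m) K :=
  Matrix.of fun i j => MvPolynomial.aeval v (MvPolynomial.pderiv i (MvPolynomial.pderiv j F))

/-- `c` is (a lift of) a smooth real point of `Y_{B,D}`, where `b, d` are lifts of `B, D`:
`c` is a nonzero common zero of the three forms defining `Y_{B,D}` at which their
gradients are linearly independent. -/
def YSmoothPt {m : ℕ} (F : MvPolynomial (Fin m) ℚ) (b d c : Fin m → ℝ) : Prop :=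
  c ≠ 0 ∧ MvPolynomial.aeval c F = 0 ∧ grad F c ⬝ᵥ d = 0 ∧ grad F b ⬝ᵥ c = 0 ∧
    LinearIndependent ℝ ![grad F c, Matrix.vecMul d (hessAt F c), grad F b]

/-- The tangent space `T̂_P = {v : ∇F(lift of P)·v = 0}` at the vector level. -/
def tangentVecs {m : ℕ} (F : MvPolynomial (Fin m) ℚ) (v : Fin m → ℝ) : Set (Fin m → ℝ) :=
  {w | grad F v ⬝ᵥ w = 0}

/-- The second fundamental form (as a quadratic form on `T̂_P`). -/
noncomputable def sff {m : ℕ} (F : MvPolynomial (Fin m) ℚ) (v w : Fin m → ℝ) : ℝ :=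
  w ⬝ᵥ Matrix.mulVec (hessAt F v) w

/-- The second fundamental form at `P` has full rank: the radical of the restriction of
the Hessian form to `T̂_P` is exactly the line `ℝ·v_P`. -/
def SFFFullRank {m : ℕ} (F : MvPolynomial (Fin m) ℚ)
    (P : Projectivization ℝ (Fin m → ℝ)) : Prop :=
  {v | v ∈ tangentVecs F P.rep ∧
      ∀ w ∈ tangentVecs F P.rep, v ⬝ᵥ Matrix.mulVec (hessAt F P.rep) w = 0}
    = {v | ∃ c : ℝ, v = c • P.rep}

/-- The second fundamental form at `P` is definite. -/
def SFFDefinite {m : ℕ} (F : MvPolynomial (Fin m) ℚ)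
    (P : Projectivization ℝ (Fin m → ℝ)) : Prop :=
  ((∀ v ∈ tangentVecs F P.rep, 0 ≤ sff F P.rep v) ∨
   (∀ v ∈ tangentVecs F P.rep, sff F P.rep v ≤ 0)) ∧
  ∀ v ∈ tangentVecs F P.rep, sff F P.rep v = 0 → ∃ c : ℝ, v = c • P.rep

/-- The second fundamental form at `P` is indefinite. -/
def SFFIndefinite {m : ℕ} (F : MvPolynomial (Fin m) ℚ)
    (P : Projectivization ℝ (Fin m → ℝ)) : Prop :=
  (∃ v ∈ tangentVecs F P.rep, 0 < sff F P.rep v) ∧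
  (∃ v ∈ tangentVecs F P.rep, sff F P.rep v < 0)

/-- `p` is (a complex lift of) an Eckardt point of `X`: `X_p` is a cone with vertex `p`,
i.e. for every point `q` of `X_p` not equal to `p`, the line through `p` and `q`
is contained in `X_p`. -/
def IsEckardt {m : ℕ} (F : MvPolynomial (Fin m) ℚ) (p : Fin m → ℂ) : Prop :=
  ∀ q : Fin m → ℂ, q ≠ 0 → MvPolynomial.aeval q F = 0 → grad F p ⬝ᵥ q = 0 →
    (¬ ∃ c : ℂ, q = c • p) →
    ∀ s t : ℂ, MvPolynomial.aeval (s • p + t • q) F = 0 ∧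
      grad F p ⬝ᵥ (s • p + t • q) = 0

/-!
Write `Φ_b(c, d) = (F(c), ∇F(c)·d, ∇F(b)·c)`, so that lifts of real points of `Y_{B,D}` are the
zeros of `Φ_b(·, d)`. At a smooth point `c` of `Y_{B,D′}` the partial derivative of `Φ_b` in `c`
is the matrix with rows `∇F(c)`, `d·H_F(c)`, `∇F(b)`, surjective by smoothness, so by the implicit
function theorem every `d` near `d′` admits a zero of `Φ_b(·, d)` near `c`; linear independence
of the rows is an open condition, so this zero is again smooth. The set of such `d` is an open
cone, hence descends to an open subset of projective space, and homogeneity of `F` puts the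
points found on `X`.
-/

open Filter Topology

namespace MvPolynomial

theorem pderiv_pderiv_comm {σ R : Type*} [CommRing R] (i j : σ) (p : MvPolynomial σ R) :
    pderiv i (pderiv j p) = pderiv j (pderiv i p) := by
  have h : ⁅pderiv i, pderiv j⁆ = (0 : Derivation R (MvPolynomial σ R) (MvPolynomial σ R)) :=
    derivation_ext fun k => by
      classical
      rw [Derivation.commutator_apply]
      simp [pderiv_X, Pi.single_apply, apply_ite]
  rw [← sub_eq_zero, ← Derivation.commutator_apply, h, Derivation.zero_apply]

theorem IsHomogeneous.aeval_smul {σ R S : Type*} [CommSemiring R] [CommSemiring S] [Algebra R S]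
    {φ : MvPolynomial σ R} {n : ℕ} (hφ : φ.IsHomogeneous n) (t : S) (v : σ → S) :
    MvPolynomial.aeval (t • v) φ = t ^ n * MvPolynomial.aeval v φ := by
  rw [φ.as_sum, map_sum, map_sum, Finset.mul_sum]
  refine Finset.sum_congr rfl fun d hd => ?_
  have hdeg : d.degree = n := by
    rw [Finsupp.degree_eq_weight_one]
    exact hφ (mem_support_iff.mp hd)
  simp only [aeval_monomial, Pi.smul_apply, smul_eq_mul, mul_pow, Finsupp.prod_mul]
  rw [Finsupp.prod, Finset.prod_pow_eq_pow_sum, ← Finsupp.degree_apply, hdeg]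
  ring

variable {ι R : Type*} [Fintype ι] [CommSemiring R] [Algebra R ℝ]

theorem hasStrictFDerivAt_aeval (p : MvPolynomial ι R) (x : ι → ℝ) :
    HasStrictFDerivAt (fun v => aeval v p)
      (∑ i, aeval x (pderiv i p) • (ContinuousLinearMap.proj i : (ι → ℝ) →L[ℝ] ℝ)) x := by
  induction p using MvPolynomial.induction_on with
  | C a => simpa using hasStrictFDerivAt_const (𝕜 := ℝ) (algebraMap R ℝ a) x
  | add p q hp hq => simpa only [map_add, add_smul, Finset.sum_add_distrib] using hp.fun_add hq
  | mul_X p i hp =>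
    simp only [map_mul, aeval_X]
    refine (hp.fun_mul (hasStrictFDerivAt_apply i x)).congr_fderiv ?_
    classical
    ext w
    simp [pderiv_X, Pi.single_apply, apply_ite, add_mul, ite_mul, Finset.sum_add_distrib,
      Finset.mul_sum, mul_assoc]

@[fun_prop]
theorem contDiff_aeval (p : MvPolynomial ι R) {n : WithTop ℕ∞} :
    ContDiff ℝ n fun v : ι → ℝ => aeval v p := by
  induction p using MvPolynomial.induction_on with
  | C a => simpa using contDiff_const
  | add p q hp hq => simpa using hp.add hq
  | mul_X p i hp => simpa using hp.mul (contDiff_apply ℝ ℝ i)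

end MvPolynomial

theorem Matrix.mulVec_surjective_of_linearIndependent_row {m n K : Type*} [Field K] [Fintype m]
    [Fintype n] {M : Matrix m n K} (h : LinearIndependent K M.row) :
    Function.Surjective M.mulVec := by
  have hrange : LinearMap.range M.mulVecLin = ⊤ := Submodule.eq_top_of_finrank_eq <| by
    rw [← Matrix.rank, h.rank_matrix, Module.finrank_fintype_fun_eq_card]
  exact LinearMap.range_eq_top.mp hrange

-- Implicit function theorem with a merely surjective partial derivative in `y`: the map
-- `(y, q) ↦ (g (y, q), q)` is then open at `(x, p)`.
theorem HasStrictFDerivAt.eventually_exists_mem_eq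
    {𝕜 E P G : Type*} [NontriviallyNormedField 𝕜]
    [NormedAddCommGroup E] [NormedSpace 𝕜 E] [CompleteSpace E]
    [NormedAddCommGroup P] [NormedSpace 𝕜 P] [CompleteSpace P]
    [NormedAddCommGroup G] [NormedSpace 𝕜 G] [CompleteSpace G]
    {g : E × P → G} {L : E × P →L[𝕜] G} {x : E} {p : P}
    (hg : HasStrictFDerivAt g L (x, p)) (hL : Function.Surjective fun w => L (w, 0))
    {S : Set (E × P)} (hS : S ∈ 𝓝 (x, p)) :
    ∀ᶠ q in 𝓝 p, ∃ y, (y, q) ∈ S ∧ g (y, q) = g (x, p) := by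
  have hsurj : (L.prod (.snd 𝕜 E P)).range = ⊤ := by
    refine LinearMap.range_eq_top.mpr fun ⟨z, q⟩ => ?_
    obtain ⟨w, hw : L (w, 0) = z - L (0, q)⟩ := hL (z - L (0, q))
    refine ⟨(w, q), Prod.ext ?_ rfl⟩
    calc L (w, q) = L (w, 0) + L (0, q) := by rw [← L.map_add, Prod.mk_add_mk, add_zero, zero_add]
      _ = z := by rw [hw, sub_add_cancel]
  have hopen := (hg.prodMk hasStrictFDerivAt_snd).map_nhds_eq_of_surj hsurj
  have himage : (fun z => (g z, z.2)) '' S ∈ 𝓝 (g (x, p), p) := hopen ▸ image_mem_map hS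
  filter_upwards [(Continuous.prodMk_right (g (x, p))).continuousAt.preimage_mem_nhds himage]
    with q ⟨⟨y, q'⟩, hyS, hyq⟩
  obtain ⟨hgy, rfl⟩ := Prod.mk.inj hyq
  exact ⟨y, hyS, hgy⟩

section SmoothPoints

variable {m : ℕ} (F : MvPolynomial (Fin m) ℚ) (b : Fin m → ℝ)

@[fun_prop]
theorem continuous_grad : Continuous (grad (K := ℝ) F) :=
  continuous_pi fun i => (contDiff_aeval (pderiv i F) (n := 0)).continuous

@[fun_prop]
theorem continuous_hessAt : Continuous (hessAt (K := ℝ) F) :=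
  continuous_pi fun _ => continuous_pi fun _ => (contDiff_aeval _ (n := 0)).continuous

-- The three forms defining `Y_{B,D}`, evaluated at `c` for `x = (c, d)` and `b` a lift of `B`.
noncomputable def yForms (x : (Fin m → ℝ) × (Fin m → ℝ)) : Fin 3 → ℝ :=
  ![aeval x.1 F, grad F x.1 ⬝ᵥ x.2, grad F b ⬝ᵥ x.1]

noncomputable def yJacobian (c d : Fin m → ℝ) : Matrix (Fin 3) (Fin m) ℝ :=
  Matrix.of ![grad F c, d ᵥ* hessAt F c, grad F b]

theorem yForms_eq_zero_iff {c d : Fin m → ℝ} : yForms F b (c, d) = 0 ↔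
    aeval c F = 0 ∧ grad F c ⬝ᵥ d = 0 ∧ grad F b ⬝ᵥ c = 0 := by
  simp [yForms, funext_iff, Fin.forall_fin_succ]

theorem ySmoothPt_iff {c d : Fin m → ℝ} : YSmoothPt F b d c ↔
    c ≠ 0 ∧ yForms F b (c, d) = 0 ∧ LinearIndependent ℝ (yJacobian F b c d).row := by
  simp only [YSmoothPt, yForms_eq_zero_iff, and_assoc]
  rfl

theorem contDiff_yForms : ContDiff ℝ 1 (yForms F b) := by
  refine contDiff_pi.mpr fun i => ?_
  fin_cases i <;>
    simp only [yForms, dotProduct, grad, Fin.zero_eta, Fin.mk_one, Fin.reduceFinMk, Fin.isValue,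
      cons_val_zero, cons_val_one, cons_val] <;>
    fun_prop

theorem continuous_yJacobian :
    Continuous fun x : (Fin m → ℝ) × (Fin m → ℝ) => yJacobian F b x.1 x.2 := by
  refine continuous_pi fun i => ?_
  fin_cases i <;>
    simp only [yJacobian, Fin.zero_eta, Fin.mk_one, Fin.reduceFinMk, Fin.isValue] <;>
    fun_prop

theorem hasFDerivAt_yForms_fst (c d : Fin m → ℝ) :
    HasFDerivAt (fun c => yForms F b (c, d))
      (yJacobian F b c d).mulVecLin.toContinuousLinearMap c := by
  refine hasFDerivAt_pi'' fun i => ?_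
  fin_cases i
  · refine (hasStrictFDerivAt_aeval F c).hasFDerivAt.congr_fderiv ?_
    ext w
    simp [yJacobian, dotProduct, grad]
  · show HasFDerivAt (fun x => ∑ i, aeval x (pderiv i F) * d i) _ c
    refine (HasFDerivAt.fun_sum fun i _ =>
      (hasStrictFDerivAt_aeval (pderiv i F) c).hasFDerivAt.mul_const (d i)).congr_fderiv ?_
    ext w
    simp only [_root_.sum_apply, _root_.smul_apply, ContinuousLinearMap.proj_apply, smul_eq_mul,
      Finset.mul_sum, Finset.sum_mul, Fin.mk_one, Fin.isValue, yJacobian, hessAt,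
      ContinuousLinearMap.comp_apply, LinearMap.coe_toContinuousLinearMap', mulVecBilin_apply,
      cons_mulVec, dotProduct, vecMul, of_apply, empty_mulVec, cons_val_one, cons_val_zero]
    rw [Finset.sum_comm]
    refine Finset.sum_congr rfl fun i _ => Finset.sum_congr rfl fun j _ => ?_
    rw [pderiv_pderiv_comm]
    ring
  · show HasFDerivAt (fun x => ∑ i, aeval b (pderiv i F) * x i) _ c
    refine (HasFDerivAt.fun_sum fun i _ =>
      (hasFDerivAt_apply i c).const_mul (aeval b (pderiv i F))).congr_fderiv ?_
    ext w
    simp [yJacobian, dotProduct, grad]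

end SmoothPoints

section Projective

variable {m : ℕ}

theorem isOpen_setOf_mk_mem {O : Set (Projectivization ℝ (Fin m → ℝ))} (hO : IsOpen O) :
    IsOpen {v : Fin m → ℝ | ∃ h : v ≠ 0, Projectivization.mk ℝ v h ∈ O} := by
  have hmk : Continuous fun v : {v : Fin m → ℝ // v ≠ 0} => Projectivization.mk ℝ v.1 v.2 :=
    continuous_quotient_mk'
  convert isOpen_compl_singleton.isOpenMap_subtype_val _ (hO.preimage hmk) using 1
  ext v
  exact ⟨fun ⟨h, hv⟩ => ⟨⟨v, h⟩, hv, rfl⟩, fun ⟨⟨w, hw⟩, hwO, hwv⟩ => hwv ▸ ⟨hw, hwO⟩⟩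

theorem isOpen_setOf_rep_mem {W : Set (Fin m → ℝ)} (hW : IsOpen W)
    (hsmul : ∀ (t : ℝˣ) v, t • v ∈ W ↔ v ∈ W) :
    IsOpen {P : Projectivization ℝ (Fin m → ℝ) | P.rep ∈ W} := by
  refine (isQuotientMap_quotient_mk'
    (s := projectivizationSetoid ℝ (Fin m → ℝ))).isOpen_preimage.mp ?_
  convert hW.preimage continuous_subtype_val using 1
  ext ⟨v, hv⟩
  obtain ⟨t, ht⟩ := Projectivization.exists_smul_eq_mk_rep ℝ v hv
  show (Projectivization.mk ℝ v hv).rep ∈ W ↔ v ∈ W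
  rw [← ht, hsmul]

theorem mk_mem_XPts {K : Type} [Field K] [Algebra ℚ K] {F : MvPolynomial (Fin m) ℚ} {k : ℕ}
    (hF : F.IsHomogeneous k) {v : Fin m → K} (hv : v ≠ 0) (h : aeval v F = 0) :
    Projectivization.mk K v hv ∈ XPts K F := by
  obtain ⟨t, ht⟩ := Projectivization.exists_smul_eq_mk_rep K v hv
  show aeval (Projectivization.mk K v hv).rep F = 0
  rw [← ht, Units.smul_def, hF.aeval_smul, h, mul_zero]

end Projective

section SmoothPointDirections

variable {m : ℕ} {F : MvPolynomial (Fin m) ℚ} {b : Fin m → ℝ}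

theorem eventually_exists_ySmoothPt {c d : Fin m → ℝ} (hc : YSmoothPt F b d c)
    {N : Set (Fin m → ℝ)} (hN : N ∈ 𝓝 c) : ∀ᶠ d' in 𝓝 d, ∃ c' ∈ N, YSmoothPt F b d' c' := by
  obtain ⟨hc0, hcY, hcJ⟩ := (ySmoothPt_iff F b).mp hc
  have hg := (contDiff_yForms F b).contDiffAt.hasStrictFDerivAt (x := (c, d)) one_ne_zero
  have hpartial : (fderiv ℝ (yForms F b) (c, d)).comp (.inl ℝ _ _) =
      (yJacobian F b c d).mulVecLin.toContinuousLinearMap :=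
    (hg.hasFDerivAt.comp (f := fun c' => (c', d)) c (hasFDerivAt_prodMk_left c d)).unique
      (hasFDerivAt_yForms_fst F b c d)
  have hsurj : Function.Surjective fun w => fderiv ℝ (yForms F b) (c, d) (w, 0) := fun y => by
    obtain ⟨w, hw⟩ := Matrix.mulVec_surjective_of_linearIndependent_row hcJ y
    exact ⟨w, by simpa [← hw] using congr($hpartial w)⟩
  have hS : (N ×ˢ Set.univ) ∩ {x | x.1 ≠ 0 ∧ LinearIndependent ℝ (yJacobian F b x.1 x.2).row}
      ∈ 𝓝 (c, d) := by
    refine inter_mem (prod_mem_nhds hN univ_mem) (IsOpen.mem_nhds ?_ ⟨hc0, hcJ⟩)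
    exact (isOpen_ne_fun continuous_fst continuous_const).inter
      (isOpen_setOfPred_linearIndependent.preimage (continuous_yJacobian F b))
  filter_upwards [hg.eventually_exists_mem_eq hsurj hS] with d' ⟨c', hc'S, hc'Y⟩
  obtain ⟨⟨hc'N, -⟩, hc'0, hc'J⟩ := hc'S
  exact ⟨c', hc'N, (ySmoothPt_iff F b).mpr ⟨hc'0, hc'Y.trans hcY, hc'J⟩⟩

theorem YSmoothPt.units_smul {c d : Fin m → ℝ} (h : YSmoothPt F b d c) (t : ℝˣ) :
    YSmoothPt F b (t • d) c := by
  obtain ⟨hc0, hcF, hd, hb, hli⟩ := h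
  refine ⟨hc0, hcF, by rw [dotProduct_smul, hd, smul_zero], hb, ?_⟩
  convert hli.units_smul ![1, t, 1] using 1
  ext i : 1
  fin_cases i <;> simp [Matrix.smul_vecMul]

theorem ySmoothPt_units_smul_iff {c d : Fin m → ℝ} (t : ℝˣ) :
    YSmoothPt F b (t • d) c ↔ YSmoothPt F b d c :=
  ⟨fun h => by simpa using h.units_smul t⁻¹, fun h => h.units_smul t⟩

variable (F b) in
def smoothPtDirs (O : Set (Projectivization ℝ (Fin m → ℝ))) : Set (Fin m → ℝ) :=
  {d | ∃ c, ∃ h : YSmoothPt F b d c, Projectivization.mk ℝ c h.1 ∈ O}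

variable {O : Set (Projectivization ℝ (Fin m → ℝ))}

theorem isOpen_smoothPtDirs (hO : IsOpen O) : IsOpen (smoothPtDirs F b O) := by
  refine isOpen_iff_mem_nhds.mpr fun d ⟨c, hc, hcO⟩ => ?_
  filter_upwards [eventually_exists_ySmoothPt hc ((isOpen_setOf_mk_mem hO).mem_nhds ⟨hc.1, hcO⟩)]
    with d' ⟨c', ⟨_, hc'O⟩, hc'⟩
  exact ⟨c', hc', hc'O⟩

theorem units_smul_mem_smoothPtDirs_iff (t : ℝˣ) (d : Fin m → ℝ) :
    t • d ∈ smoothPtDirs F b O ↔ d ∈ smoothPtDirs F b O :=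
  ⟨fun ⟨c, hc, hcO⟩ => ⟨c, (ySmoothPt_units_smul_iff t).mp hc, hcO⟩,
    fun ⟨c, hc, hcO⟩ => ⟨c, (ySmoothPt_units_smul_iff t).mpr hc, hcO⟩⟩

end SmoothPointDirections

theorem statement4_general (n : ℕ)
    (F : MvPolynomial (Fin (n + 2)) ℚ) (hF : SmoothCubic F)
    (B D' : Projectivization ℝ (Fin (n + 2) → ℝ))
    (hD' : D' ∈ XPts ℝ F)
    (c : Fin (n + 2) → ℝ) (hc : YSmoothPt F B.rep D'.rep c)
    (V : Set (Projectivization ℝ (Fin (n + 2) → ℝ))) (hV : IsOpenInX F V)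
    (hcV : Projectivization.mk ℝ c hc.1 ∈ V) :
    ∃ U, IsOpenInX F U ∧ D' ∈ U ∧
      ∀ D ∈ U, ∃ (c' : Fin (n + 2) → ℝ) (h : YSmoothPt F B.rep D.rep c'),
        Projectivization.mk ℝ c' h.1 ∈ V := by
  obtain ⟨O, hO, rfl⟩ := hV
  refine ⟨{D | D.rep ∈ smoothPtDirs F B.rep O} ∩ XPts ℝ F,
    ⟨_, isOpen_setOf_rep_mem (isOpen_smoothPtDirs hO) units_smul_mem_smoothPtDirs_iff, rfl⟩,
    ⟨⟨c, hc, hcV.1⟩, hD'⟩, ?_⟩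
  rintro D ⟨⟨c', hc', hc'O⟩, -⟩
  exact ⟨c', hc', hc'O, mk_mem_XPts hF.2.1 hc'.1 hc'.2.1⟩

/-- if `Y_{B,D′}` has a smooth real point `C′` and `V` is an open
neighbourhood of `C′` in `X(ℝ)`, then for all `D` in some open neighbourhood of `D′`
in `X(ℝ)`, `Y_{B,D}` has a smooth real point in `V`. -/
theorem statement4 (n : ℕ) (hn : 1 ≤ n)
    (F : MvPolynomial (Fin (n + 2)) ℚ) (hF : SmoothCubic F)
    (B D' : Projectivization ℝ (Fin (n + 2) → ℝ))
    (hB : B ∈ XPts ℝ F) (hD' : D' ∈ XPts ℝ F)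
    (c : Fin (n + 2) → ℝ) (hc : YSmoothPt F B.rep D'.rep c)
    (V : Set (Projectivization ℝ (Fin (n + 2) → ℝ))) (hV : IsOpenInX F V)
    (hcV : Projectivization.mk ℝ c hc.1 ∈ V) :
    ∃ U, IsOpenInX F U ∧ D' ∈ U ∧
      ∀ D ∈ U, ∃ (c' : Fin (n + 2) → ℝ) (h : YSmoothPt F B.rep D.rep c'),
        Projectivization.mk ℝ c' h.1 ∈ V :=
  statement4_general n F hF B D' hD' c hc V hV hcV
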